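/- Fix a positive integer d and v ∈ I(d). (1) For consecutive elements α > β of a v-chain C, odepth_C(β) = odepth_C(α) + 2 if and only if α has type H in C and p_h(α) > β; otherwise odepth_C(β) = odepth_C(α) + 1. (2) The o-depth in a v-chain of an element of type H is odd. (3) If an element of type V in a v-chain is the last element of its connected component, then its o-depth is even. (4) If a v-chain C contains an element of o-depth m, then for every odd m′ ≤ m, C contains an element of o-depth m′; and if for some even m′ ≤ m, C contains no element of o-depth m′, then the element α of C of o-depth m′ − 1 has type H in C and p_h(α) > β, where β is the immediate successor of α in C. (5) If α has type H in a v-chain C, then the depth of p_h(α) in 𝔖_C equals odepth_C(α) + 1; in particular this depth is even. -/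

import Mathlib

/-!
Write `α_i = (r_i, c_i)` for the `i`-th element of the chain: rows decrease and columns increase.
The type of `α_i` only depends on whether `α_i` is connected to `α_{i+1}` and on the parity of
its position in its component, and once an element has type S, so do all later ones.

Let `level 0 = 1` and `level (i + 1) = level i + 2` if `α_i` has type H and `p_h(α_i) > α_{i+1}`
(a jump), `level i + 1` otherwise. The elements `q_{C,α_i}`, with `p_h(α_i)` inserted at each jump,
form a chain in `𝔖_C`, so `depth (q_{C,α_i}) ≥ level i`. Conversely, rank each element of
`𝔖_{C,α_i}` by `level i`, and `p_h(α_i)` by `level i + 1`: ranks increase strictly along `>`,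
so no chain is longer. Hence `odepth_C(α_i) = level i`, and the rest is arithmetic of `level`:
every component containing an element of type V or H starts at an odd level, which gives the
parities, and the values skipped by `level` are exactly the `level j + 1` at jumps.
-/

namespace OG

/-- `star d k = k* = 2d+1-k`. -/
def star (d k : ℕ) : ℕ := 2 * d + 1 - k

/-- `I(d,2d)`: the set of `d`-element subsets of `{1,…,2d}`. -/
def Idn (d : ℕ) : Set (Finset ℕ) :=
  {v | v.card = d ∧ ∀ k ∈ v, 1 ≤ k ∧ k ≤ 2 * d}

/-- The partial order on `I(d,2d)`: entrywise comparison of increasing enumerations. -/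
def leI (x y : Finset ℕ) : Prop :=
  List.Forall₂ (· ≤ ·) (x.sort (· ≤ ·)) (y.sort (· ≤ ·))

/-- `I(d)`: elements of `I(d,2d)` containing exactly one of `k`, `k*` for each `k`,
with evenly many entries exceeding `d`. -/
def Iset (d : ℕ) : Set (Finset ℕ) :=
  {v | v ∈ Idn d ∧ (∀ k, 1 ≤ k → k ≤ 2 * d → (k ∈ v ↔ star d k ∉ v)) ∧
       Even ((v.filter (fun k => d < k)).card)}

/-- membership in `N(v)`. -/
def inN (d : ℕ) (v : Finset ℕ) (p : ℕ × ℕ) : Prop :=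
  1 ≤ p.1 ∧ p.1 ≤ 2 * d ∧ 1 ≤ p.2 ∧ p.2 ≤ 2 * d ∧ p.1 ∉ v ∧ p.2 ∈ v ∧ p.2 < p.1

/-- membership in `OR(v)`. -/
def inOR (d : ℕ) (v : Finset ℕ) (p : ℕ × ℕ) : Prop :=
  1 ≤ p.1 ∧ p.1 ≤ 2 * d ∧ 1 ≤ p.2 ∧ p.2 ≤ 2 * d ∧ p.1 ∉ v ∧ p.2 ∈ v ∧ p.1 < star d p.2

/-- membership in `ON(v) = OR(v) ∩ N(v)`. -/
def inON (d : ℕ) (v : Finset ℕ) (p : ℕ × ℕ) : Prop := inN d v p ∧ inOR d v p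

/-- membership in the diagonal `D(v)`. -/
def inDiag (d : ℕ) (v : Finset ℕ) (p : ℕ × ℕ) : Prop :=
  p.1 ∉ v ∧ p.2 ∈ v ∧ p.1 = star d p.2

instance (d : ℕ) (v : Finset ℕ) : DecidablePred (inN d v) := fun p => by
  unfold inN; infer_instance

instance (d : ℕ) (v : Finset ℕ) : DecidablePred (inOR d v) := fun p => by
  unfold inOR; infer_instance

instance (d : ℕ) (v : Finset ℕ) : DecidablePred (inON d v) := fun p => by
  unfold inON; infer_instance

instance (d : ℕ) (v : Finset ℕ) : DecidablePred (inDiag d v) := fun p => by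
  unfold inDiag; infer_instance

/-- `(R,C) > (r,c)` iff `R > r` and `C < c`. -/
def pgt (A B : ℕ × ℕ) : Prop := B.1 < A.1 ∧ A.2 < B.2

instance : DecidableRel pgt := fun A B => by unfold pgt; infer_instance

/-- `(R,C)` dominates `(r,c)` iff `R ≥ r` and `C ≤ c`. -/
def pdom (A B : ℕ × ℕ) : Prop := B.1 ≤ A.1 ∧ A.2 ≤ B.2

/-- vertical projection `p_v(r,c) = (c*,c)`. -/
def pv (d : ℕ) (α : ℕ × ℕ) : ℕ × ℕ := (star d α.2, α.2)

/-- horizontal projection `p_h(r,c) = (r,r*)`. -/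
def ph (d : ℕ) (α : ℕ × ℕ) : ℕ × ℕ := (α.1, star d α.1)

/-- `(r,c)^# = (c*,r*)`. -/
def hash (d : ℕ) (α : ℕ × ℕ) : ℕ × ℕ := (star d α.2, star d α.1)

/-- A `v`-chain: a strictly decreasing (under `pgt`) list of elements of `ON(v)`. -/
def IsVChain (d : ℕ) (v : Finset ℕ) (C : List (ℕ × ℕ)) : Prop :=
  C.Chain' pgt ∧ ∀ α ∈ C, inON d v α

/-- Two consecutive elements `(r,c) > (R,C)` of a `v`-chain are connected
if `r* ≥ C` and `R > r*`. -/
def Connected (d : ℕ) (α β : ℕ × ℕ) : Prop :=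
  β.2 ≤ star d α.1 ∧ star d α.1 < β.1

instance (d : ℕ) : ∀ α β, Decidable (Connected d α β) := fun α β => by
  unfold Connected; infer_instance

/-- The connected components of a `v`-chain. -/
def components (d : ℕ) (C : List (ℕ × ℕ)) : List (List (ℕ × ℕ)) :=
  C.splitBy (fun a b => decide (Connected d a b))

/-- The three possible types of an element of a `v`-chain. -/
inductive VType | V | H | S
deriving DecidableEq

/-- The type of an element `α` of a `v`-chain `C`: type V if `α` is not the last element
of its connected component or that component has even cardinality; otherwise type H if
`p_h(α) ∈ N(v)` (i.e. `r > r*`) and type S if not. -/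
def typeOf (d : ℕ) (C : List (ℕ × ℕ)) (α : ℕ × ℕ) : VType :=
  match (components d C).find? (fun g => decide (α ∈ g)) with
  | some g =>
      if g.getLast? = some α ∧ Odd g.length then
        (if star d α.1 < α.1 then VType.H else VType.S)
      else VType.V
  | none => VType.V

/-- `𝔖_{C,α}`. -/
def SCa (d : ℕ) (C : List (ℕ × ℕ)) (α : ℕ × ℕ) : Multiset (ℕ × ℕ) :=
  match typeOf d C α with
  | VType.V => {pv d α}
  | VType.H => {pv d α, ph d α}
  | VType.S => {α, hash d α}

/-- `𝔖_C`: the multiset union of the `𝔖_{C,α}` over `α ∈ C`. -/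
def SC (d : ℕ) (C : List (ℕ × ℕ)) : Multiset (ℕ × ℕ) :=
  (C.map (fun α => SCa d C α)).sum

/-- `q_{C,α}`. -/
def qCa (d : ℕ) (C : List (ℕ × ℕ)) (α : ℕ × ℕ) : ℕ × ℕ :=
  match typeOf d C α with
  | VType.S => α
  | _ => pv d α

/-- A strictly decreasing chain of elements of the monomial `S`. -/
def IsChainIn (S : Multiset (ℕ × ℕ)) (L : List (ℕ × ℕ)) : Prop :=
  L.Chain' pgt ∧ ∀ β ∈ L, β ∈ S

/-- The depth of `α` in a monomial `S` of `N(v)`: the maximal length of a strictly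
decreasing chain of elements of `S` ending at `α`. -/
noncomputable def depth (S : Multiset (ℕ × ℕ)) (α : ℕ × ℕ) : ℕ :=
  sSup {k | ∃ L, IsChainIn S L ∧ L.getLast? = some α ∧ L.length = k}

/-- The o-depth of `α` in a `v`-chain `C`: the depth of `q_{C,α}` in `𝔖_C`. -/
noncomputable def odepthC (d : ℕ) (C : List (ℕ × ℕ)) (α : ℕ × ℕ) : ℕ :=
  depth (SC d C) (qCa d C α)

/-- The o-depth of `α` in a monomial `S` of `ON(v)`: the maximum of `odepthC` over
all `v`-chains in `S` containing `α`. -/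
noncomputable def odepthM (d : ℕ) (v : Finset ℕ) (S : Multiset (ℕ × ℕ)) (α : ℕ × ℕ) : ℕ :=
  sSup {k | ∃ C, IsVChain d v C ∧ (∀ β ∈ C, β ∈ S) ∧ α ∈ C ∧ odepthC d C α = k}

/-- A distinguished subset of `N(v)`. -/
def Distinguished (d : ℕ) (v : Finset ℕ) (S : Finset (ℕ × ℕ)) : Prop :=
  (∀ p ∈ S, inN d v p) ∧
  ∀ A ∈ S, ∀ B ∈ S, A ≠ B →
    A.1 ≠ B.1 ∧ A.2 ≠ B.2 ∧ (B.1 < A.1 → (B.1 < A.2 ∨ A.2 < B.2))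

/-- The element of `I(d,2d)` attached to a distinguished subset `S` of `N(v)`:
remove from `v` the column indices of elements of `S` and add their row indices. -/
def toW (v : Finset ℕ) (S : Finset (ℕ × ℕ)) : Finset ℕ :=
  (v \ S.image Prod.snd) ∪ S.image Prod.fst

/-- `w(C) = w_C`, the element of `I(d,2d)` attached to the `v`-chain `C` via the
distinguished subset `𝔖_C`. -/
def wC (d : ℕ) (v : Finset ℕ) (C : List (ℕ × ℕ)) : Finset ℕ :=
  toW v (SC d C).toFinset

/-- `w` ortho-dominates a monomial `S` in `ON(v)`: `w ≥ w(C)` for every `v`-chain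
`C` contained in `S`. -/
def ODominates (d : ℕ) (v w : Finset ℕ) (S : Multiset (ℕ × ℕ)) : Prop :=
  ∀ C : List (ℕ × ℕ), IsVChain d v C → (∀ β ∈ C, β ∈ S) → leI (wC d v C) w

/-- `x` dominates a monomial `S` in `N(v)` (in the sense of the Grassmannian case):
`x ≥ w_L` for every strictly decreasing chain `L` contained in `S`. -/
def Dominates (d : ℕ) (v x : Finset ℕ) (S : Multiset (ℕ × ℕ)) : Prop :=
  ∀ L : List (ℕ × ℕ), L.Chain' pgt → (∀ β ∈ L, β ∈ S) → leI (toW v L.toFinset) x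

/-- The `v`-degree of `θ`: half the cardinality of `v \ θ`. -/
def vdeg (v θ : Finset ℕ) : ℕ := (v \ θ).card / 2

/-- the element next to `α` in the list `C`. -/
def nextInC (C : List (ℕ × ℕ)) (α : ℕ × ℕ) : Option (ℕ × ℕ) :=
  C[C.idxOf α + 1]?

/-- The critical element of a `v`-chain: its first element whose horizontal projection
does not belong to `N(v)` (i.e. with `r ≤ r*`). -/
def critical (d : ℕ) (C : List (ℕ × ℕ)) : Option (ℕ × ℕ) :=
  C.find? (fun x => decide (x.1 ≤ star d x.1))

/-- `α` is the last element of its connected component in `C`. -/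
def isCompLast (d : ℕ) (C : List (ℕ × ℕ)) (α : ℕ × ℕ) : Prop :=
  ∃ g ∈ components d C, g.getLast? = some α

/-- The condition (*): `α` has type H in `C` and `p_h(α) ≯ β'` for some `β' ∈ 𝔖_{C,β}`. -/
def starCond (d : ℕ) (C : List (ℕ × ℕ)) (α β : ℕ × ℕ) : Prop :=
  typeOf d C α = VType.H ∧ ∃ β' ∈ SCa d C β, ¬ pgt (ph d α) β'

/-- A standard monomial in `I(d)`: a weakly decreasing sequence of elements of `I(d)`. -/
def IsStdMon (d : ℕ) (L : List (Finset ℕ)) : Prop :=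
  (∀ θ ∈ L, θ ∈ Iset d) ∧ L.Chain' (fun a b => leI b a)

/-- A standard monomial is `w`-dominated if `w ≥ θ₁`. -/
def WDominated (w : Finset ℕ) (L : List (Finset ℕ)) : Prop :=
  ∀ θ, L.head? = some θ → leI θ w

/-- A standard monomial is `v`-compatible if each member is comparable with `v`
and distinct from `v`. -/
def VCompatible (v : Finset ℕ) (L : List (Finset ℕ)) : Prop :=
  ∀ θ ∈ L, θ ≠ v ∧ (leI θ v ∨ leI v θ)

/-- The degree of a standard monomial: the sum of the `v`-degrees of its members. -/
def stdDeg (v : Finset ℕ) (L : List (Finset ℕ)) : ℕ :=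
  (L.map (fun θ => vdeg v θ)).sum

end OG

namespace List

variable {α : Type*} {R : α → α → Bool} {l : List α}

theorem extract_mem_splitBy {a b : ℕ} (hab : a ≤ b) (hb : b < l.length)
    (hstart : ∀ h : 0 < a, R l[a - 1] l[a] = false)
    (hend : ∀ h : b + 1 < l.length, R l[b] l[b + 1] = false)
    (hchain : ∀ j (_ : a ≤ j) (hj : j < b), R l[j] l[j + 1] = true) :
    l.extract a (b + 1) ∈ l.splitBy R := by
  set seg := l.extract a (b + 1) with hseg_def
  have hlen : seg.length = b + 1 - a := by simp [seg]; omega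
  have hget : ∀ k (hk : k < seg.length), seg[k] = l[a + k]'(by omega) := by
    intro k hk; simp [seg, List.getElem_take, List.getElem_drop]
  have hne : seg ≠ [] := List.ne_nil_of_length_pos (by omega)
  have hchain' : seg.IsChain fun x y ↦ R x y := by
    refine List.isChain_iff_getElem.2 fun k hk ↦ ?_
    rw [hget, hget]
    simpa [Nat.add_assoc] using hchain (a + k) (by omega) (by omega)
  have hl : l = l.take a ++ (seg ++ l.drop (b + 1)) := by
    have : l.drop (b + 1) = (l.drop a).drop (b + 1 - a) := by rw [drop_drop]; congr 1; omega
    rw [hseg_def, extract_eq_take_drop, this, take_append_drop, take_append_drop]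
  have hsplit : l.splitBy R = (l.take a).splitBy R ++ seg :: (l.drop (b + 1)).splitBy R := by
    conv_lhs => rw [hl]
    rw [splitBy_append, splitBy_append, splitBy_of_isChain hne hchain']
    · rfl
    · intro x hx y hy
      rw [getLast?_eq_some_getLast hne, Option.mem_some_iff, getLast_eq_getElem, hget] at hx
      rw [head?_drop, Option.mem_def, getElem?_eq_some_iff] at hy
      obtain ⟨hy, rfl⟩ := hy
      subst hx
      simpa [hlen, show a + (b + 1 - a - 1) = b by omega] using hend hy
    · intro x hx y hy
      rw [head?_append, head?_eq_some_head hne, Option.some_or, Option.mem_some_iff,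
        head_eq_getElem, hget] at hy
      rcases Nat.eq_zero_or_pos a with rfl | ha
      · simp at hx
      rw [getLast?_take, if_neg (by omega), getElem?_eq_getElem (by omega), Option.some_or,
        Option.mem_some_iff] at hx
      subst hx hy
      simpa [show a - 1 + 1 = a by omega] using hstart ha
  rw [hsplit]
  simp

theorem eq_of_mem_splitBy_of_mem (hl : l.Nodup) {g h : List α} (hg : g ∈ l.splitBy R)
    (hh : h ∈ l.splitBy R) {x : α} (hxg : x ∈ g) (hxh : x ∈ h) : g = h := by
  by_contra hne
  rw [← flatten_splitBy R l, nodup_flatten] at hl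
  have : Std.Symm (Disjoint (α := α)) := ⟨fun _ _ ↦ Disjoint.symm⟩
  exact hl.2.forall hg hh hne hxg hxh

theorem find?_splitBy_eq_some (hl : l.Nodup) {g : List α} {x : α} (hg : g ∈ l.splitBy R)
    (hx : x ∈ g) {p : List α → Bool} (hp : ∀ g, p g ↔ x ∈ g) :
    (l.splitBy R).find? p = some g := by
  cases hfind : (l.splitBy R).find? p with
  | none => exact absurd ((hp g).2 hx) (by simpa using find?_eq_none.1 hfind g hg)
  | some g' =>
    exact congrArg some (eq_of_mem_splitBy_of_mem hl (mem_of_find?_eq_some hfind) hg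
      ((hp g').1 (find?_some hfind)) hx)

end List

namespace OG

variable {d : ℕ} {C : List (ℕ × ℕ)} {i j : ℕ} {p q x y α : ℕ × ℕ} {S : Multiset (ℕ × ℕ)}
  {L : List (ℕ × ℕ)}

/-! ### Chains in a monomial -/

theorem IsChainIn.append_singleton (hL : IsChainIn S L) (hx : L.getLast? = some x)
    (hxy : pgt x y) (hy : y ∈ S) : IsChainIn S (L ++ [y]) := by
  refine ⟨List.isChain_append.2 ⟨hL.1, List.isChain_singleton y, ?_⟩, ?_⟩
  · simp [hx, hxy]
  · intro β hβ
    rcases List.mem_append.1 hβ with hβ | hβ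
    exacts [hL.2 β hβ, List.mem_singleton.1 hβ ▸ hy]

/-- Ranks form a relation rather than a function, so that an element of `S` need not be
attributed to a unique `𝔖_{C,α}`. -/
theorem IsChainIn.length_le_of_rank {rank : ℕ × ℕ → ℕ → Prop} (hpos : ∀ p k, rank p k → 0 < k)
    (hex : ∀ p ∈ S, ∃ k, rank p k) (hmono : ∀ p q k l, rank p k → rank q l → pgt p q → k < l)
    (hL : IsChainIn S L) (hy : L.getLast? = some y) {k : ℕ} (hk : rank y k) : L.length ≤ k := by
  induction L using List.reverseRecOn generalizing y k with
  | nil => simp at hy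
  | append_singleton L z ih =>
    obtain rfl : z = y := by simpa using hy
    rcases L.eq_nil_or_concat with rfl | ⟨L', x, rfl⟩
    · exact hpos _ _ hk
    obtain ⟨hch, -, hxz⟩ := List.isChain_append.1 hL.1
    obtain ⟨kx, hkx⟩ := hex x (hL.2 x (by simp))
    have := ih ⟨hch, fun β hβ ↦ hL.2 β (List.mem_append_left _ hβ)⟩ (by simp) hkx
    have := hmono _ _ _ _ hkx hk (hxz x (by simp) z (by simp))
    simp only [List.concat_eq_append, List.length_append, List.length_singleton] at *
    omega

theorem depth_eq_length_of_rank {rank : ℕ × ℕ → ℕ → Prop} (hpos : ∀ p k, rank p k → 0 < k)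
    (hex : ∀ p ∈ S, ∃ k, rank p k) (hmono : ∀ p q k l, rank p k → rank q l → pgt p q → k < l)
    (hL : IsChainIn S L) (hy : L.getLast? = some y) (hk : rank y L.length) :
    depth S y = L.length :=
  IsGreatest.csSup_eq ⟨⟨L, hL, hy, rfl⟩, fun _ ⟨_, hL', hy', hm⟩ ↦
    hm ▸ hL'.length_le_of_rank hpos hex hmono hy' hk⟩

/-! ### Connected components and types by index -/

def row (C : List (ℕ × ℕ)) (i : ℕ) : ℕ := (C.getD i (0, 0)).1

def col (C : List (ℕ × ℕ)) (i : ℕ) : ℕ := (C.getD i (0, 0)).2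

theorem getElem_eq_row_col (hi : i < C.length) : C[i] = (row C i, col C i) := by
  unfold row col
  rw [List.getD_eq_getElem _ _ hi]

def ConnectedAt (d : ℕ) (C : List (ℕ × ℕ)) (i : ℕ) : Prop :=
  i + 1 < C.length ∧ col C (i + 1) ≤ star d (row C i) ∧ star d (row C i) < row C (i + 1)

instance : Decidable (ConnectedAt d C i) := by unfold ConnectedAt; infer_instance

theorem decide_connected_getElem (hi : i + 1 < C.length) :
    decide (Connected d (C[i]'(Nat.lt_of_succ_lt hi)) C[i + 1]) = decide (ConnectedAt d C i) := by
  simp [Connected, ConnectedAt, hi, getElem_eq_row_col]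

def compStart (d : ℕ) (C : List (ℕ × ℕ)) : ℕ → ℕ
  | 0 => 0
  | i + 1 => if ConnectedAt d C i then compStart d C i else i + 1

theorem compStart_succ :
    compStart d C (i + 1) = if ConnectedAt d C i then compStart d C i else i + 1 := rfl

theorem compStart_le (i : ℕ) : compStart d C i ≤ i := by
  induction i with
  | zero => rfl
  | succ i ih => rw [compStart_succ]; split_ifs <;> omega

theorem not_connectedAt_pred_compStart (i : ℕ) (h : 0 < compStart d C i) :
    ¬ ConnectedAt d C (compStart d C i - 1) := by
  induction i with
  | zero => exact absurd h (lt_irrefl 0)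
  | succ i ih =>
    rw [compStart_succ] at h ⊢
    split_ifs at h ⊢ with hc
    · exact ih h
    · simpa using hc

theorem connectedAt_of_compStart_le (h1 : compStart d C i ≤ j) (h2 : j < i) :
    ConnectedAt d C j := by
  induction i with
  | zero => omega
  | succ i ih =>
    rw [compStart_succ] at h1
    split_ifs at h1 with hc
    · rcases Nat.lt_succ_iff_lt_or_eq.1 h2 with h2 | rfl
      exacts [ih h1 h2, hc]
    · omega

theorem exists_compEnd (hi : i < C.length) : ∃ b, i ≤ b ∧ b < C.length ∧
    ¬ ConnectedAt d C b ∧ ∀ j, i ≤ j → j < b → ConnectedAt d C j := by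
  have hlast : i ≤ C.length - 1 ∧ ¬ ConnectedAt d C (C.length - 1) :=
    ⟨by omega, fun h ↦ by have := h.1; omega⟩
  have hex : ∃ b, i ≤ b ∧ ¬ ConnectedAt d C b := ⟨_, hlast⟩
  refine ⟨Nat.find hex, (Nat.find_spec hex).1, ?_, (Nat.find_spec hex).2, fun j hij hj ↦ ?_⟩
  · have := Nat.find_min' hex hlast
    omega
  · have := Nat.find_min hex hj
    tauto

theorem extract_compStart_mem_components {b : ℕ} (hib : i ≤ b) (hb : b < C.length)
    (hend : ¬ ConnectedAt d C b) (hchain : ∀ j, i ≤ j → j < b → ConnectedAt d C j) :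
    C.extract (compStart d C i) (b + 1) ∈ components d C := by
  have hab := (compStart_le (d := d) (C := C) i).trans hib
  refine List.extract_mem_splitBy hab hb (fun h ↦ ?_)
    (fun h ↦ by simpa [decide_connected_getElem h] using hend) (fun j hj hjb ↦ ?_)
  · have e := decide_connected_getElem (d := d) (C := C) (i := compStart d C i - 1) (by omega)
    simp only [Nat.sub_add_cancel h] at e
    simpa [e] using not_connectedAt_pred_compStart i h
  · rw [decide_connected_getElem, decide_eq_true_iff]
    rcases lt_or_ge j i with hji | hij
    exacts [connectedAt_of_compStart_le hj hji, hchain j hij hjb]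

theorem exists_component (hi : i < C.length) : ∃ b, ∃ hb : b < C.length,
    (b = i ↔ ¬ ConnectedAt d C i) ∧ C.extract (compStart d C i) (b + 1) ∈ components d C ∧
    C[i] ∈ C.extract (compStart d C i) (b + 1) ∧
    (C.extract (compStart d C i) (b + 1)).getLast? = some C[b] ∧
    (C.extract (compStart d C i) (b + 1)).length = b + 1 - compStart d C i := by
  obtain ⟨b, hib, hb, hend, hchain⟩ := exists_compEnd (d := d) hi
  have hle := compStart_le (d := d) (C := C) i
  refine ⟨b, hb, ⟨by rintro rfl; exact hend, fun h ↦ ?_⟩,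
    extract_compStart_mem_components hib hb hend hchain, ?_, ?_, by simp; omega⟩
  · by_contra hne
    exact h (hchain i le_rfl (by omega))
  · simp only [List.extract_eq_take_drop, List.mem_iff_getElem, List.getElem_take,
      List.getElem_drop, List.length_take, List.length_drop]
    exact ⟨i - compStart d C i, by omega, by simp [Nat.add_sub_cancel' hle]⟩
  · rw [List.getLast?_eq_getElem?, List.extract_eq_take_drop, List.length_take, List.length_drop,
      List.getElem?_take_of_lt (by omega), List.getElem?_drop,
      show compStart d C i + (min (b + 1 - compStart d C i) (C.length - compStart d C i) - 1) = b by
        omega, List.getElem?_eq_getElem hb]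

def kindAt (d : ℕ) (C : List (ℕ × ℕ)) (i : ℕ) : VType :=
  if ¬ ConnectedAt d C i ∧ Odd (i + 1 - compStart d C i) then
    (if star d (row C i) < row C i then VType.H else VType.S)
  else VType.V

theorem typeOf_getElem (hC : C.Nodup) (hi : i < C.length) : typeOf d C C[i] = kindAt d C i := by
  obtain ⟨b, hb, hbi, hmem, hiseg, hlast, hlen⟩ := exists_component (d := d) hi
  unfold typeOf kindAt
  rw [components, List.find?_splitBy_eq_some hC hmem hiseg (by simp)]
  simp only [hlast, hlen, Option.some.injEq, hC.getElem_inj_iff, hbi]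
  by_cases hc : ConnectedAt d C i
  · simp [hc]
  · simp [hc, hbi.2 hc, getElem_eq_row_col]

theorem isCompLast_getElem_iff (hC : C.Nodup) (hi : i < C.length) :
    isCompLast d C C[i] ↔ ¬ ConnectedAt d C i := by
  obtain ⟨b, hb, hbi, hmem, hiseg, hlast, -⟩ := exists_component (d := d) hi
  refine ⟨fun ⟨g, hg, hglast⟩ ↦ ?_, fun hc ↦ ⟨_, hmem, by obtain rfl := hbi.2 hc; exact hlast⟩⟩
  rw [List.eq_of_mem_splitBy_of_mem hC hg hmem (List.mem_of_getLast? hglast) hiseg, hlast,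
    Option.some.injEq, hC.getElem_inj_iff] at hglast
  exact hbi.1 hglast

theorem kindAt_of_connectedAt (h : ConnectedAt d C i) : kindAt d C i = .V := by
  simp [kindAt, h]

theorem kindAt_eq_H : kindAt d C i = .H ↔
    ¬ ConnectedAt d C i ∧ Odd (i + 1 - compStart d C i) ∧ star d (row C i) < row C i := by
  unfold kindAt; split_ifs <;> simp_all

theorem kindAt_eq_S : kindAt d C i = .S ↔
    ¬ ConnectedAt d C i ∧ Odd (i + 1 - compStart d C i) ∧ row C i ≤ star d (row C i) := by
  unfold kindAt; split_ifs <;> simp_all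

theorem kindAt_eq_V : kindAt d C i = .V ↔ ConnectedAt d C i ∨ Even (i + 1 - compStart d C i) := by
  unfold kindAt; split_ifs <;> simp_all [← Nat.not_odd_iff_even]; tauto

/-! ### The o-depth along the chain -/

def Jump (d : ℕ) (C : List (ℕ × ℕ)) (i : ℕ) : Prop :=
  i + 1 < C.length ∧ kindAt d C i = .H ∧ star d (row C i) < col C (i + 1)

instance : Decidable (Jump d C i) := by unfold Jump; infer_instance

/-- The o-depth of `C[i]`, see `IsOrthoChain.odepthC_getElem`. -/
def level (d : ℕ) (C : List (ℕ × ℕ)) : ℕ → ℕ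
  | 0 => 1
  | i + 1 => level d C i + 1 + if Jump d C i then 1 else 0

theorem not_jump_of_kindAt_ne_H (h : kindAt d C i ≠ .H) : ¬ Jump d C i := fun hJ ↦ h hJ.2.1

theorem level_succ : level d C (i + 1) = level d C i + 1 + if Jump d C i then 1 else 0 := rfl

theorem level_succ_of_jump (h : Jump d C i) : level d C (i + 1) = level d C i + 2 := by
  simp [level, h]

theorem level_succ_of_not_jump (h : ¬ Jump d C i) : level d C (i + 1) = level d C i + 1 := by
  simp [level, h]

theorem add_le_level (hij : i ≤ j) : level d C i + (j - i) ≤ level d C j := by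
  induction j, hij using Nat.le_induction with
  | base => simp
  | succ j hij ih => rw [level_succ]; split <;> omega

theorem level_pos (i : ℕ) : 0 < level d C i := by
  have := add_le_level (d := d) (C := C) (Nat.zero_le i)
  simp only [level] at this
  omega

theorem level_add_two_le (h : kindAt d C j = .H) (hji : j < i) (hi : i < C.length)
    (hcol : star d (row C j) < col C i) : level d C j + 2 ≤ level d C i := by
  rcases (Nat.succ_le_of_lt hji).eq_or_lt with rfl | hlt
  · exact (level_succ_of_jump ⟨hi, h, hcol⟩).ge
  · have := add_le_level (d := d) (C := C) hlt.le
    rw [level_succ] at this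
    split at this <;> omega

theorem level_eq_level_compStart_add (i : ℕ) :
    level d C i = level d C (compStart d C i) + (i - compStart d C i) := by
  induction i with
  | zero => rfl
  | succ i ih =>
    by_cases hc : ConnectedAt d C i
    · rw [level_succ_of_not_jump (not_jump_of_kindAt_ne_H (by simp [kindAt_of_connectedAt hc])),
        compStart_succ, if_pos hc, ih]
      have := compStart_le (d := d) (C := C) i
      omega
    · rw [compStart_succ, if_neg hc]
      simp

theorem exists_level_eq (i : ℕ) {m : ℕ} (h1 : 1 ≤ m) (h2 : m ≤ level d C i) :
    (∃ j ≤ i, level d C j = m) ∨ (∃ j < i, Jump d C j ∧ level d C j + 1 = m) := by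
  induction i with
  | zero => exact .inl ⟨0, le_rfl, by simp [level] at h2 ⊢; omega⟩
  | succ i ih =>
    by_cases hm : m ≤ level d C i
    · rcases ih hm with ⟨j, hj, hjm⟩ | ⟨j, hj, hjm⟩
      exacts [.inl ⟨j, by omega, hjm⟩, .inr ⟨j, by omega, hjm⟩]
    by_cases hJ : Jump d C i
    · rw [level_succ_of_jump hJ] at h2
      rcases (show m = level d C i + 1 ∨ m = level d C i + 2 by omega) with rfl | rfl
      exacts [.inr ⟨i, by omega, hJ, rfl⟩, .inl ⟨i + 1, le_rfl, level_succ_of_jump hJ⟩]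
    · rw [level_succ_of_not_jump hJ] at h2
      exact .inl ⟨i + 1, le_rfl, by rw [level_succ_of_not_jump hJ]; omega⟩

/-! ### The monomial `𝔖_C` by index -/

theorem mem_SC : p ∈ SC d C ↔ ∃ α ∈ C, p ∈ SCa d C α := by
  suffices ∀ l : List (ℕ × ℕ), p ∈ (l.map (SCa d C)).sum ↔ ∃ α ∈ l, p ∈ SCa d C α from this C
  intro l
  induction l <;> simp_all

theorem ph_getElem (hi : i < C.length) : ph d C[i] = (row C i, star d (row C i)) := by
  rw [getElem_eq_row_col]; rfl

theorem mem_SCa_getElem (hC : C.Nodup) (hi : i < C.length) : p ∈ SCa d C C[i] ↔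
    (kindAt d C i ≠ .S ∧ p = (star d (col C i), col C i)) ∨
    (kindAt d C i = .H ∧ p = (row C i, star d (row C i))) ∨
    (kindAt d C i = .S ∧ (p = (row C i, col C i) ∨ p = (star d (col C i), star d (row C i)))) := by
  unfold SCa
  rw [typeOf_getElem hC hi, getElem_eq_row_col]
  cases kindAt d C i <;> simp [pv, ph, hash]

theorem qCa_getElem (hC : C.Nodup) (hi : i < C.length) : qCa d C C[i] =
    if kindAt d C i = .S then (row C i, col C i) else (star d (col C i), col C i) := by
  unfold qCa
  rw [typeOf_getElem hC hi, getElem_eq_row_col]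
  cases kindAt d C i <;> rfl

theorem qCa_mem_SCa (α : ℕ × ℕ) : qCa d C α ∈ SCa d C α := by
  unfold qCa SCa
  cases typeOf d C α <;> simp

theorem qCa_mem_SC (hi : i < C.length) : qCa d C C[i] ∈ SC d C :=
  mem_SC.2 ⟨_, List.getElem_mem hi, qCa_mem_SCa _⟩

def rankAt (d : ℕ) (C : List (ℕ × ℕ)) (i : ℕ) (p : ℕ × ℕ) : ℕ :=
  if kindAt d C i = .H ∧ p = (row C i, star d (row C i)) then level d C i + 1 else level d C i

/-! ### Chains of `ON(v)` -/

instance : IsTrans (ℕ × ℕ) pgt := ⟨fun _ _ _ hab hbc ↦ ⟨hbc.1.trans hab.1, hab.2.trans hbc.2⟩⟩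

/-- The numerical content of `IsVChain d v C`; `r + c ≤ 2d` is `r < c*`. -/
def IsOrthoChain (d : ℕ) (C : List (ℕ × ℕ)) : Prop :=
  C.IsChain pgt ∧ ∀ p ∈ C, p.2 < p.1 ∧ p.1 + p.2 ≤ 2 * d

theorem IsVChain.isOrthoChain {v : Finset ℕ} (h : IsVChain d v C) : IsOrthoChain d C := by
  refine ⟨h.1, fun p hp ↦ ?_⟩
  obtain ⟨⟨-, -, -, -, -, -, hN⟩, ⟨-, -, -, hc, -, -, hOR⟩⟩ := h.2 p hp
  unfold star at hOR
  omega

namespace IsOrthoChain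

variable (hC : IsOrthoChain d C)
include hC

theorem nodup : C.Nodup :=
  (List.isChain_iff_pairwise.1 hC.1).imp fun h he ↦ (he ▸ h).1.false

theorem pgt_getElem (hij : i < j) (hj : j < C.length) : pgt C[i] C[j] :=
  List.pairwise_iff_getElem.1 (List.isChain_iff_pairwise.1 hC.1) i j (by omega) hj hij

theorem row_lt_row (hij : i < j) (hj : j < C.length) : row C j < row C i := by
  simpa [getElem_eq_row_col] using (hC.pgt_getElem hij hj).1

theorem col_lt_col (hij : i < j) (hj : j < C.length) : col C i < col C j := by
  simpa [getElem_eq_row_col] using (hC.pgt_getElem hij hj).2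

theorem row_lt_row_iff (hi : i < C.length) (hj : j < C.length) : row C j < row C i ↔ i < j := by
  rcases lt_trichotomy i j with h | rfl | h
  · simp [h, hC.row_lt_row h hj]
  · simp
  · have := hC.row_lt_row h hi; omega

theorem col_lt_col_iff (hi : i < C.length) (hj : j < C.length) : col C i < col C j ↔ i < j := by
  rcases lt_trichotomy i j with h | rfl | h
  · simp [h, hC.col_lt_col h hj]
  · simp
  · have := hC.col_lt_col h hi; omega

theorem col_lt_row (hi : i < C.length) : col C i < row C i := by
  simpa [getElem_eq_row_col] using (hC.2 _ (List.getElem_mem hi)).1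

theorem row_add_col_le (hi : i < C.length) : row C i + col C i ≤ 2 * d := by
  simpa [getElem_eq_row_col] using (hC.2 _ (List.getElem_mem hi)).2

theorem kindAt_succ_eq_S (hnc : ¬ ConnectedAt d C i)
    (hsmall : row C (i + 1) ≤ star d (row C (i + 1))) : kindAt d C (i + 1) = .S := by
  refine kindAt_eq_S.2 ⟨fun ⟨hi2, _, hlt⟩ ↦ ?_, by simp [compStart_succ, hnc], hsmall⟩
  have := hC.row_lt_row (Nat.lt_add_one _) hi2
  omega

theorem kindAt_succ_of_eq_S (h : kindAt d C i = .S) (hi : i + 1 < C.length) :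
    kindAt d C (i + 1) = .S := by
  obtain ⟨hnc, -, hsmall⟩ := kindAt_eq_S.1 h
  refine hC.kindAt_succ_eq_S hnc ?_
  have := hC.row_lt_row (Nat.lt_add_one _) hi
  unfold star at *
  omega

theorem kindAt_eq_S_of_le (h : kindAt d C i = .S) (hij : i ≤ j) (hj : j < C.length) :
    kindAt d C j = .S := by
  induction j, hij using Nat.le_induction with
  | base => exact h
  | succ j _ ih => exact hC.kindAt_succ_of_eq_S (ih (by omega)) hj

theorem star_row_lt_col_of_H (h : kindAt d C i = .H) (hij : i < j) (hj : j < C.length)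
    (hk : kindAt d C j ≠ .S) : star d (row C i) < col C j := by
  obtain ⟨hnc, -, hbig⟩ := kindAt_eq_H.1 h
  have hk1 : kindAt d C (i + 1) ≠ .S := fun h' ↦ hk (hC.kindAt_eq_S_of_le h' hij hj)
  have hcol : col C (i + 1) ≤ col C j := by
    rcases (Nat.succ_le_of_lt hij).eq_or_lt with rfl | hlt
    exacts [le_rfl, (hC.col_lt_col hlt hj).le]
  by_contra! hle
  have hrow : row C (i + 1) ≤ star d (row C i) := by
    by_contra! hlt
    exact hnc ⟨by omega, by omega, hlt⟩
  refine hk1 (hC.kindAt_succ_eq_S hnc ?_)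
  unfold star at *
  omega

theorem odd_level_compStart (hi : i < C.length) (hk : kindAt d C i ≠ .S) :
    Odd (level d C (compStart d C i)) := by
  induction i with
  | zero => simp [compStart, level]
  | succ i ih =>
    by_cases hc : ConnectedAt d C i
    · rw [compStart_succ, if_pos hc]
      exact ih (by omega) (by simp [kindAt_of_connectedAt hc])
    rw [compStart_succ, if_neg hc]
    have hki : kindAt d C i ≠ .S := fun h ↦ hk (hC.kindAt_succ_of_eq_S h hi)
    have hodd := ih (by omega) hki
    have hrun := level_eq_level_compStart_add (d := d) (C := C) i
    have hle := compStart_le (d := d) (C := C) i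
    rw [Nat.odd_iff] at hodd ⊢
    cases hkind : kindAt d C i
    · have hev := (kindAt_eq_V.1 hkind).resolve_left hc
      rw [Nat.even_iff] at hev
      rw [level_succ_of_not_jump (not_jump_of_kindAt_ne_H (by simp [hkind]))]
      omega
    · have hpar := (kindAt_eq_H.1 hkind).2.1
      have hJ : Jump d C i := ⟨hi, hkind, hC.star_row_lt_col_of_H hkind (by omega) hi hk⟩
      rw [Nat.odd_iff] at hpar
      rw [level_succ_of_jump hJ]
      omega
    · exact absurd hkind hki

theorem odd_level_of_H (hi : i < C.length) (h : kindAt d C i = .H) : Odd (level d C i) := by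
  have hodd := hC.odd_level_compStart hi (by simp [h])
  have hpar := (kindAt_eq_H.1 h).2.1
  have := compStart_le (d := d) (C := C) i
  rw [level_eq_level_compStart_add, Nat.odd_iff]
  rw [Nat.odd_iff] at hodd hpar
  omega

theorem even_level_of_V (hi : i < C.length) (h : kindAt d C i = .V) (hc : ¬ ConnectedAt d C i) :
    Even (level d C i) := by
  have hodd := hC.odd_level_compStart hi (by simp [h])
  have hev := (kindAt_eq_V.1 h).resolve_left hc
  have := compStart_le (d := d) (C := C) i
  rw [level_eq_level_compStart_add, Nat.even_iff]
  rw [Nat.odd_iff] at hodd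
  rw [Nat.even_iff] at hev
  omega

theorem rankAt_lt_rankAt (hj : j < C.length) (hi : i < C.length) (hp : p ∈ SCa d C C[j])
    (hq : q ∈ SCa d C C[i]) (hpq : pgt p q) : rankAt d C j p < rankAt d C i q := by
  have hrow := hC.row_lt_row_iff hi hj
  have hrow' := hC.row_lt_row_iff hj hi
  have hcol := hC.col_lt_col_iff hi hj
  have hcol' := hC.col_lt_col_iff hj hi
  have hbi := hC.col_lt_row hi
  have hbj := hC.col_lt_row hj
  have hsi := hC.row_add_col_le hi
  have hsj := hC.row_add_col_le hj
  have hlev : j ≤ i → level d C j + (i - j) ≤ level d C i := add_le_level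
  have hjump : kindAt d C j = .H → j < i → star d (row C j) < col C i →
      level d C j + 2 ≤ level d C i := fun h hji ↦ level_add_two_le h hji hi
  have hHi : kindAt d C i = .H → star d (row C i) < row C i := fun h ↦ (kindAt_eq_H.1 h).2.2
  have hHj : kindAt d C j = .H → star d (row C j) < row C j := fun h ↦ (kindAt_eq_H.1 h).2.2
  have hSi : kindAt d C i = .S → row C i ≤ star d (row C i) := fun h ↦ (kindAt_eq_S.1 h).2.2
  have hSj : kindAt d C j = .S → row C j ≤ star d (row C j) := fun h ↦ (kindAt_eq_S.1 h).2.2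
  have hHS : kindAt d C i = .H → kindAt d C j ≠ .S → i < j → star d (row C i) < col C j :=
    fun h hk hij ↦ hC.star_row_lt_col_of_H h hij hj hk
  have hSS : kindAt d C j = .S → kindAt d C i ≠ .S → i < j := fun h hk ↦ by
    by_contra hji
    exact hk (hC.kindAt_eq_S_of_le h (by omega) hi)
  rw [mem_SCa_getElem hC.nodup hj] at hp
  rw [mem_SCa_getElem hC.nodup hi] at hq
  unfold rankAt
  -- once the kinds of `α_j` and `α_i` are fixed, each of the sixteen cases is linear arithmetic
  rcases hp with ⟨hkj, rfl⟩ | ⟨hkj, rfl⟩ | ⟨hkj, rfl | rfl⟩ <;>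
  rcases hq with ⟨hki, rfl⟩ | ⟨hki, rfl⟩ | ⟨hki, rfl | rfl⟩ <;>
  simp only [hkj, hki, reduceCtorEq, Prod.mk.injEq, true_and, false_and, true_implies,
    false_implies, ne_eq, not_false_eq_true, not_true_eq_false]
    at hjump hHi hHj hSi hSj hHS hSS ⊢ <;>
  unfold pgt star at * <;> split_ifs <;> omega

theorem ph_mem_SC (hi : i < C.length) (h : kindAt d C i = .H) : ph d C[i] ∈ SC d C :=
  mem_SC.2 ⟨_, List.getElem_mem hi, by simp [mem_SCa_getElem hC.nodup hi, h, ph_getElem]⟩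

theorem pgt_qCa_succ (hi : i + 1 < C.length) :
    pgt (qCa d C (C[i]'(Nat.lt_of_succ_lt hi))) (qCa d C C[i + 1]) := by
  have hrow := hC.row_lt_row (Nat.lt_add_one i) hi
  have hcol := hC.col_lt_col (Nat.lt_add_one i) hi
  have hb := hC.row_add_col_le (i := i) (by omega)
  have hS : kindAt d C i = .S → kindAt d C (i + 1) = .S := fun h ↦ hC.kindAt_succ_of_eq_S h hi
  rw [qCa_getElem hC.nodup, qCa_getElem hC.nodup]
  split_ifs <;> simp_all [pgt, star] <;> omega

theorem pgt_qCa_ph (hi : i < C.length) (h : kindAt d C i = .H) :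
    pgt (qCa d C C[i]) (ph d C[i]) := by
  have hb := hC.row_add_col_le hi
  rw [qCa_getElem hC.nodup, ph_getElem, if_neg (by simp [h])]
  unfold pgt star
  omega

theorem pgt_ph_qCa_succ (hi : i + 1 < C.length) (hJ : Jump d C i) :
    pgt (ph d (C[i]'(Nat.lt_of_succ_lt hi))) (qCa d C C[i + 1]) := by
  obtain ⟨-, hH, hcol⟩ := hJ
  have hrow := hC.row_lt_row (Nat.lt_add_one i) hi
  rw [qCa_getElem hC.nodup, ph_getElem]
  unfold pgt star at *
  split_ifs <;> simp only <;> omega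

theorem exists_chain_qCa (hi : i < C.length) : ∃ L, IsChainIn (SC d C) L ∧
    L.getLast? = some (qCa d C C[i]) ∧ L.length = level d C i := by
  induction i with
  | zero => exact ⟨[_], ⟨List.isChain_singleton _, fun _ h ↦ (List.mem_singleton.1 h) ▸
      qCa_mem_SC hi⟩, rfl, rfl⟩
  | succ i ih =>
    obtain ⟨L, hL, hlast, hlen⟩ := ih (by omega)
    by_cases hJ : Jump d C i
    · have hL' := hL.append_singleton hlast (hC.pgt_qCa_ph _ hJ.2.1) (hC.ph_mem_SC _ hJ.2.1)
      refine ⟨_, hL'.append_singleton (by simp) (hC.pgt_ph_qCa_succ hi hJ) (qCa_mem_SC hi),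
        by simp, ?_⟩
      simp [hlen, level_succ_of_jump hJ]
    · refine ⟨_, hL.append_singleton hlast (hC.pgt_qCa_succ hi) (qCa_mem_SC hi), by simp, ?_⟩
      simp [hlen, level_succ_of_not_jump hJ]

theorem depth_SC_eq_rankAt (hi : i < C.length) (hy : y ∈ SCa d C C[i])
    (hL : IsChainIn (SC d C) L) (hlast : L.getLast? = some y) (hlen : L.length = rankAt d C i y) :
    depth (SC d C) y = rankAt d C i y := by
  rw [← hlen]
  refine depth_eq_length_of_rank
    (rank := fun p k ↦ ∃ i, ∃ hi : i < C.length, p ∈ SCa d C C[i] ∧ rankAt d C i p = k)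
    ?_ ?_ ?_ hL hlast ⟨i, hi, hy, hlen.symm⟩
  · rintro p k ⟨i, -, -, rfl⟩
    unfold rankAt
    have := level_pos (d := d) (C := C) i
    split_ifs <;> omega
  · intro p hp
    obtain ⟨α, hα, hpα⟩ := mem_SC.1 hp
    obtain ⟨i, hi, rfl⟩ := List.mem_iff_getElem.1 hα
    exact ⟨_, i, hi, hpα, rfl⟩
  · rintro p q k l ⟨j, hj, hp, rfl⟩ ⟨i, hi, hq, rfl⟩ hpq
    exact hC.rankAt_lt_rankAt hj hi hp hq hpq

theorem odepthC_getElem (hi : i < C.length) : odepthC d C C[i] = level d C i := by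
  obtain ⟨L, hL, hlast, hlen⟩ := hC.exists_chain_qCa hi
  have hq : rankAt d C i (qCa d C C[i]) = level d C i := by
    have hb := hC.row_add_col_le hi
    rw [rankAt, qCa_getElem hC.nodup]
    split_ifs <;> simp_all [star]; omega
  rw [odepthC, ← hq]
  exact hC.depth_SC_eq_rankAt hi (qCa_mem_SCa _) hL hlast (hlen.trans hq.symm)

theorem depth_ph_getElem (hi : i < C.length) (h : kindAt d C i = .H) :
    depth (SC d C) (ph d C[i]) = level d C i + 1 := by
  obtain ⟨L, hL, hlast, hlen⟩ := hC.exists_chain_qCa hi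
  have hr : rankAt d C i (ph d C[i]) = level d C i + 1 := by simp [rankAt, h, ph_getElem]
  rw [← hr]
  exact hC.depth_SC_eq_rankAt hi (by simp [mem_SCa_getElem hC.nodup hi, h, ph_getElem])
    (hL.append_singleton hlast (hC.pgt_qCa_ph hi h) (hC.ph_mem_SC hi h)) (by simp)
    (by simp [hlen, hr])

theorem jump_iff (hi : i + 1 < C.length) :
    Jump d C i ↔ typeOf d C (C[i]'(Nat.lt_of_succ_lt hi)) = .H ∧
      pgt (ph d (C[i]'(Nat.lt_of_succ_lt hi))) C[i + 1] := by
  have := hC.row_lt_row (Nat.lt_add_one i) hi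
  rw [typeOf_getElem hC.nodup, ph_getElem, getElem_eq_row_col hi, Jump]
  simp [pgt, hi, this]

theorem odepthC_getElem_succ (hi : i + 1 < C.length) :
    odepthC d C C[i + 1] = odepthC d C (C[i]'(Nat.lt_of_succ_lt hi)) +
      if typeOf d C (C[i]'(Nat.lt_of_succ_lt hi)) = .H ∧
        pgt (ph d (C[i]'(Nat.lt_of_succ_lt hi))) C[i + 1] then 2 else 1 := by
  rw [hC.odepthC_getElem, hC.odepthC_getElem]
  split_ifs with h
  exacts [level_succ_of_jump ((hC.jump_iff hi).2 h),
    level_succ_of_not_jump (mt (hC.jump_iff hi).1 h)]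

theorem odd_odepthC (hα : α ∈ C) (h : typeOf d C α = .H) : Odd (odepthC d C α) := by
  obtain ⟨i, hi, rfl⟩ := List.mem_iff_getElem.1 hα
  rw [typeOf_getElem hC.nodup] at h
  rw [hC.odepthC_getElem]
  exact hC.odd_level_of_H hi h

theorem even_odepthC (hα : α ∈ C) (h : typeOf d C α = .V) (hlast : isCompLast d C α) :
    Even (odepthC d C α) := by
  obtain ⟨i, hi, rfl⟩ := List.mem_iff_getElem.1 hα
  rw [typeOf_getElem hC.nodup] at h
  rw [isCompLast_getElem_iff hC.nodup] at hlast
  rw [hC.odepthC_getElem]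
  exact hC.even_level_of_V hi h hlast

theorem depth_ph (hα : α ∈ C) (h : typeOf d C α = .H) :
    depth (SC d C) (ph d α) = odepthC d C α + 1 := by
  obtain ⟨i, hi, rfl⟩ := List.mem_iff_getElem.1 hα
  rw [typeOf_getElem hC.nodup] at h
  rw [hC.odepthC_getElem, hC.depth_ph_getElem hi h]

theorem exists_odepthC_eq (hα : α ∈ C) {m : ℕ} (h1 : 1 ≤ m) (hm : m ≤ odepthC d C α) :
    (∃ β ∈ C, odepthC d C β = m) ∨ (∃ β ∈ C, odepthC d C β + 1 = m ∧ typeOf d C β = .H ∧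
      ∃ γ, nextInC C β = some γ ∧ pgt (ph d β) γ) := by
  obtain ⟨i, hi, rfl⟩ := List.mem_iff_getElem.1 hα
  rw [hC.odepthC_getElem] at hm
  rcases exists_level_eq i h1 hm with ⟨j, hj, rfl⟩ | ⟨j, hj, hJ, rfl⟩
  · exact .inl ⟨C[j], List.getElem_mem _, hC.odepthC_getElem _⟩
  · obtain ⟨hH, hpgt⟩ := (hC.jump_iff hJ.1).1 hJ
    refine .inr ⟨C[j], List.getElem_mem _, by rw [hC.odepthC_getElem], hH, C[j + 1], ?_, hpgt⟩
    simp [nextInC, hC.nodup.idxOf_getElem, hJ.1]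

end IsOrthoChain

end OG

open OG in
/-- arithmetic of o-depths along a `v`-chain. -/
theorem stmt11 (d : ℕ) (v : Finset ℕ)
    (C : List (ℕ × ℕ)) (hC : IsVChain d v C) :
    -- (1)
    (∀ i : ℕ, ∀ hi : i + 1 < C.length,
      (odepthC d C (C[i+1]'hi) = odepthC d C (C[i]'(by omega)) + 2 ↔
        (typeOf d C (C[i]'(by omega)) = VType.H ∧ pgt (ph d (C[i]'(by omega))) (C[i+1]'hi))) ∧
      (¬ (typeOf d C (C[i]'(by omega)) = VType.H ∧
            pgt (ph d (C[i]'(by omega))) (C[i+1]'hi)) →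
        odepthC d C (C[i+1]'hi) = odepthC d C (C[i]'(by omega)) + 1)) ∧
    -- (2)
    (∀ α ∈ C, typeOf d C α = VType.H → Odd (odepthC d C α)) ∧
    -- (3)
    (∀ α ∈ C, typeOf d C α = VType.V → isCompLast d C α → Even (odepthC d C α)) ∧
    -- (4)
    (∀ m : ℕ, (∃ α ∈ C, odepthC d C α = m) →
      (∀ m' ≤ m, Odd m' → ∃ α ∈ C, odepthC d C α = m') ∧
      (∀ m' ≤ m, Even m' → 0 < m' → (¬ ∃ α ∈ C, odepthC d C α = m') →
        ∃ α ∈ C, odepthC d C α = m' - 1 ∧ typeOf d C α = VType.H ∧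
          ∃ β, nextInC C α = some β ∧ pgt (ph d α) β)) ∧
    -- (5)
    (∀ α ∈ C, typeOf d C α = VType.H →
      depth (SC d C) (ph d α) = odepthC d C α + 1 ∧
      Even (depth (SC d C) (ph d α))) := by
  have hO := hC.isOrthoChain
  refine ⟨fun i hi ↦ ?_, fun α hα ↦ hO.odd_odepthC hα, fun α hα ↦ hO.even_odepthC hα,
    fun m ⟨α, hα, hm⟩ ↦ ⟨fun m' hm' hodd ↦ ?_, fun m' hm' _ hpos hnot ↦ ?_⟩,
    fun α hα h ↦ ⟨hO.depth_ph hα h, hO.depth_ph hα h ▸ (hO.odd_odepthC hα h).add_one⟩⟩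
  · rw [hO.odepthC_getElem_succ hi]
    split_ifs <;> simp_all
  · rcases hO.exists_odepthC_eq hα hodd.pos (hm ▸ hm') with h | ⟨β, hβ, rfl, hH, -⟩
    · exact h
    · exact absurd (hO.odd_odepthC hβ hH).add_one (Nat.not_even_iff_odd.2 hodd)
  · rcases hO.exists_odepthC_eq hα hpos (hm ▸ hm') with h | ⟨β, hβ, rfl, hH, hnext⟩
    · exact absurd h hnot
    · exact ⟨β, hβ, rfl, hH, hnext⟩
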